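/- Let n be not coprime to p and let C = ⟨A₁,…,A_{2k}⟩ be a cyclic code of length n over R = F_p[u,v]/⟨u^k, v², uv−vu⟩ with torsion code C_{2k} = {f ∈ F_p[x]/⟨xⁿ−1⟩ : u^{k−1}v f ∈ C}. Then the minimum Hamming weight of C equals the minimum Hamming weight of the F_p-cyclic code C_{2k}. -/

import Mathlib

set_option synthInstance.maxHeartbeats 1000000

open Polynomial

/-- The ring `F_p[u,v]/⟨u^k, v²⟩` (the variables commute, so `uv - vu = 0` is automatic). -/
abbrev Rbase (p k : ℕ) : Type :=
  MvPolynomial (Fin 2) (ZMod p) ⧸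
    Ideal.span {(MvPolynomial.X 0 : MvPolynomial (Fin 2) (ZMod p)) ^ k, MvPolynomial.X 1 ^ 2}

/-- The image of `u`. -/
noncomputable def uu (p k : ℕ) : Rbase p k := Ideal.Quotient.mk _ (MvPolynomial.X 0)

/-- The image of `v`. -/
noncomputable def vv (p k : ℕ) : Rbase p k := Ideal.Quotient.mk _ (MvPolynomial.X 1)

instance Rbase.polyIdealIsTwoSided (p k : ℕ) (I : Ideal (Polynomial (Rbase p k))) :
    I.IsTwoSided :=
  @Ideal.instIsTwoSided _ Polynomial.commSemiring I

/-- `R_n = (F_p[u,v]/⟨u^k,v²⟩)[x]/⟨xⁿ−1⟩`, the ambient ring of cyclic codes of length `n`. -/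
abbrev Rn (p k n : ℕ) : Type :=
  Polynomial (Rbase p k) ⧸
    Ideal.span {(Polynomial.X : Polynomial (Rbase p k)) ^ n - 1}

noncomputable def uR (p k n : ℕ) : Rn p k n := Ideal.Quotient.mk _ (Polynomial.C (uu p k))
noncomputable def vR (p k n : ℕ) : Rn p k n := Ideal.Quotient.mk _ (Polynomial.C (vv p k))
noncomputable def xR (p k n : ℕ) : Rn p k n := Ideal.Quotient.mk _ Polynomial.X

/-- The canonical map `F_p[x] → R_n` (coefficientwise inclusion followed by the quotient map). -/
noncomputable def theta (p k n : ℕ) : Polynomial (ZMod p) →+* Rn p k n :=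
  (Ideal.Quotient.mk _).comp (Polynomial.mapRingHom (algebraMap (ZMod p) (Rbase p k)))

/-- The set of `f ∈ F_p[x]` representing elements of
`C_i = Tor Res … Res (C) = {f : u^{i-1}·f ∈ C mod ⟨u^i, v⟩}`. -/
def resTorSet (p k n : ℕ) (C : Ideal (Rn p k n)) (i : ℕ) : Set (Polynomial (ZMod p)) :=
  {f | uR p k n ^ (i - 1) * theta p k n f ∈
        C ⊔ Ideal.span {uR p k n ^ i, vR p k n}}

/-- The set of `f ∈ F_p[x]` representing elements of
`C_{k+i} = Tor Res … Res Tor (C) = {f : u^{i-1}·v·f ∈ C mod ⟨u^i v⟩}`. -/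
def torTorSet (p k n : ℕ) (C : Ideal (Rn p k n)) (i : ℕ) : Set (Polynomial (ZMod p)) :=
  {f | uR p k n ^ (i - 1) * vR p k n * theta p k n f ∈
        C ⊔ Ideal.span {uR p k n ^ i * vR p k n}}

/-- `g` is the (monic, minimal-degree) generator of the ideal of `F_p[x]/⟨xⁿ−1⟩` whose set
of polynomial representatives is `S`. -/
def IsMinGen (p n : ℕ) (S : Set (Polynomial (ZMod p))) (g : Polynomial (ZMod p)) : Prop :=
  g.Monic ∧
  S = {f | ∃ a b : Polynomial (ZMod p), f = g * a + (Polynomial.X ^ n - 1) * b} ∧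
  ∀ f ∈ S, f ≠ 0 → g.degree ≤ f.degree

/-- The canonical generator
`A_i = u^{i-1}g_i + u^i g_{ii} + ⋯ + u^{k-1}g_{i(k-1)} + v(g_{ik} + ⋯ + u^{k-1}g_{i(2k-1)})`
as a polynomial over `F_p[u,v]/⟨u^k,v²⟩`, for `1 ≤ i ≤ k`. -/
noncomputable def Apoly (p k : ℕ) (g : ℕ → Polynomial (ZMod p))
    (gg : ℕ → ℕ → Polynomial (ZMod p)) (i : ℕ) : Polynomial (Rbase p k) :=
  Polynomial.C (uu p k ^ (i - 1)) * (g i).map (algebraMap (ZMod p) (Rbase p k))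
    + ∑ j ∈ Finset.Icc i (k - 1),
        Polynomial.C (uu p k ^ j) * (gg i j).map (algebraMap (ZMod p) (Rbase p k))
    + Polynomial.C (vv p k) *
        ∑ j ∈ Finset.Icc k (2 * k - 1),
          Polynomial.C (uu p k ^ (j - k)) * (gg i j).map (algebraMap (ZMod p) (Rbase p k))

/-- The canonical generator
`A_{k+i} = v(u^{i-1}g_{k+i} + u^i g_{(k+i)(k+i)} + ⋯ + u^{k-1}g_{(k+i)(2k-1)})`
as a polynomial over `F_p[u,v]/⟨u^k,v²⟩`, for `1 ≤ i ≤ k`. -/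
noncomputable def AVpoly (p k : ℕ) (g : ℕ → Polynomial (ZMod p))
    (gg : ℕ → ℕ → Polynomial (ZMod p)) (i : ℕ) : Polynomial (Rbase p k) :=
  Polynomial.C (vv p k) *
    (Polynomial.C (uu p k ^ (i - 1)) * (g (k + i)).map (algebraMap (ZMod p) (Rbase p k))
      + ∑ j ∈ Finset.Icc (k + i) (2 * k - 1),
          Polynomial.C (uu p k ^ (j - k)) * (gg (k + i) j).map (algebraMap (ZMod p) (Rbase p k)))

/-- `A_i` as an element of `R_n`. -/
noncomputable def Aelt (p k n : ℕ) (g : ℕ → Polynomial (ZMod p))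
    (gg : ℕ → ℕ → Polynomial (ZMod p)) (i : ℕ) : Rn p k n :=
  Ideal.Quotient.mk _ (Apoly p k g gg i)

/-- `A_{k+i}` as an element of `R_n`. -/
noncomputable def AVelt (p k n : ℕ) (g : ℕ → Polynomial (ZMod p))
    (gg : ℕ → ℕ → Polynomial (ZMod p)) (i : ℕ) : Rn p k n :=
  Ideal.Quotient.mk _ (AVpoly p k g gg i)

/-- The minimum Hamming weight of a nonzero codeword of `C ⊆ R_n` (weights are computed
on the unique representative of degree `< n`). -/
noncomputable def dHam (p k n : ℕ) (C : Ideal (Rn p k n)) : ℕ :=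
  sInf {m | ∃ f : Polynomial (Rbase p k), f ≠ 0 ∧ f.degree < (n : ℕ) ∧
    Ideal.Quotient.mk (Ideal.span {(Polynomial.X : Polynomial (Rbase p k)) ^ n - 1}) f ∈ C ∧
    m = f.support.card}

/-- The minimum Hamming weight of a nonzero codeword of a cyclic code over `F_p` given by a
set `S` of polynomial representatives (closed under adding multiples of `xⁿ−1`). -/
noncomputable def dHamF (p n : ℕ) (S : Set (Polynomial (ZMod p))) : ℕ :=
  sInf {m | ∃ f : Polynomial (ZMod p), f ≠ 0 ∧ f.degree < (n : ℕ) ∧ f ∈ S ∧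
    m = f.support.card}

/-!
Every coefficient of a codeword lies in `R = F_p[u,v]/⟨u^k, v²⟩`, whose socle (the common
annihilator of `u` and `v`) is the line `F_p u^{k-1} v`. Multiplying a nonzero codeword of `C`
first by `v` (if that keeps it nonzero) and then by the largest power of `u` that keeps it nonzero
produces a nonzero codeword with socle coefficients and no larger support, i.e. `u^{k-1} v f` with
`f ∈ C_{2k}` and `wt f` at most the original weight. Conversely `f ↦ u^{k-1} v f` maps `C_{2k}`
into `C` preserving supports. Hence the two minimum weights agree.
-/

theorem exists_pow_mul_ne_zero_and_pow_succ_mul_eq_zero {M : Type*} [MonoidWithZero M]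
    {a x : M} {N : ℕ} (hx : x ≠ 0) (h : a ^ N * x = 0) :
    ∃ m, a ^ m * x ≠ 0 ∧ a ^ (m + 1) * x = 0 := by
  induction N with
  | zero => exact absurd (by simpa using h) hx
  | succ N ih =>
    by_cases hN : a ^ N * x = 0
    · exact ih hN
    · exact ⟨N, hN, h⟩

theorem Nat.sInf_eq_sInf_of_subset_of_forall_exists_le {S T : Set ℕ} (hTS : T ⊆ S)
    (hS : ∀ m ∈ S, ∃ m' ∈ T, m' ≤ m) : sInf S = sInf T := by
  rcases S.eq_empty_or_nonempty with rfl | hne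
  · rw [Set.subset_empty_iff.mp hTS]
  obtain ⟨m', hm'T, hm'⟩ := hS _ (Nat.sInf_mem hne)
  exact le_antisymm (csInf_le_csInf' ⟨m', hm'T⟩ hTS) ((Nat.sInf_le hm'T).trans hm')

section Rbase

variable (p k : ℕ)

theorem Rbase.mk_eq_zero_iff (P : MvPolynomial (Fin 2) (ZMod p)) :
    (Ideal.Quotient.mk (Ideal.span {(MvPolynomial.X 0 : MvPolynomial (Fin 2) (ZMod p)) ^ k,
        MvPolynomial.X 1 ^ 2}) P = 0) ↔ ∀ m ∈ P.support, k ≤ m 0 ∨ 2 ≤ m 1 := by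
  have hgens : ({(MvPolynomial.X 0 : MvPolynomial (Fin 2) (ZMod p)) ^ k, MvPolynomial.X 1 ^ 2} :
      Set _) = (fun s => MvPolynomial.monomial s (1 : ZMod p)) ''
        {Finsupp.single (0 : Fin 2) k, Finsupp.single (1 : Fin 2) 2} := by
    simp [Set.image_pair, MvPolynomial.X_pow_eq_monomial]
  rw [Ideal.Quotient.eq_zero_iff_mem, hgens, MvPolynomial.mem_ideal_span_monomial_image]
  simp [Finsupp.single_le_iff]

theorem uu_pow_self : uu p k ^ k = 0 := by
  rw [uu, ← map_pow, Ideal.Quotient.eq_zero_iff_mem]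
  exact Ideal.subset_span (by simp)

theorem vv_mul_self : vv p k * vv p k = 0 := by
  rw [vv, ← map_mul, Ideal.Quotient.eq_zero_iff_mem, ← sq]
  exact Ideal.subset_span (by simp)

noncomputable def socleGen : Rbase p k := uu p k ^ (k - 1) * vv p k

noncomputable abbrev socleExp : Fin 2 →₀ ℕ := Finsupp.single 0 (k - 1) + Finsupp.single 1 1

theorem algebraMap_mul_socleGen (c : ZMod p) :
    algebraMap (ZMod p) (Rbase p k) c * socleGen p k
      = Ideal.Quotient.mk _ (MvPolynomial.monomial (socleExp k) c) := by
  rw [socleGen, uu, vv, ← Ideal.Quotient.mk_algebraMap, MvPolynomial.algebraMap_eq,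
    ← map_pow, ← map_mul, ← map_mul]
  congr 1
  rw [MvPolynomial.C_apply, MvPolynomial.X_pow_eq_monomial,
    ← pow_one (MvPolynomial.X (1 : Fin 2)), MvPolynomial.X_pow_eq_monomial,
    MvPolynomial.monomial_mul, MvPolynomial.monomial_mul, zero_add, mul_one, mul_one]

variable {p k}

theorem algebraMap_mul_socleGen_eq_zero_iff (hk : 0 < k) {c : ZMod p} :
    algebraMap (ZMod p) (Rbase p k) c * socleGen p k = 0 ↔ c = 0 := by
  refine ⟨fun h => ?_, fun h => by rw [h, map_zero, zero_mul]⟩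
  by_contra hc
  rw [algebraMap_mul_socleGen, Rbase.mk_eq_zero_iff, MvPolynomial.support_monomial,
    if_neg hc] at h
  have : k ≤ k - 1 ∨ 2 ≤ 1 := by simpa using h (socleExp k) (Finset.mem_singleton_self _)
  omega

theorem exists_eq_algebraMap_mul_socleGen {r : Rbase p k}
    (hu : uu p k * r = 0) (hv : vv p k * r = 0) :
    ∃ c : ZMod p, r = algebraMap (ZMod p) (Rbase p k) c * socleGen p k := by
  obtain ⟨P, rfl⟩ := Ideal.Quotient.mk_surjective r
  rw [uu, ← map_mul, Rbase.mk_eq_zero_iff] at hu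
  rw [vv, ← map_mul, Rbase.mk_eq_zero_iff] at hv
  replace hu : ∀ m ∈ P.support, k ≤ 1 + m 0 ∨ 2 ≤ m 1 := by simpa using hu
  replace hv : ∀ m ∈ P.support, k ≤ m 0 ∨ 2 ≤ 1 + m 1 := by simpa using hv
  refine ⟨P.coeff (socleExp k), ?_⟩
  rw [algebraMap_mul_socleGen, ← sub_eq_zero, ← map_sub, Rbase.mk_eq_zero_iff]
  intro m hm
  have hm_ne : m ≠ socleExp k := by
    rintro rfl
    simp at hm
  have hmP : m ∈ P.support := by
    rwa [MvPolynomial.mem_support_iff, MvPolynomial.coeff_sub, MvPolynomial.coeff_monomial,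
      if_neg hm_ne.symm, sub_zero, ← MvPolynomial.mem_support_iff] at hm
  have hm_ne' : ¬ (m 0 = k - 1 ∧ m 1 = 1) := fun ⟨h0, h1⟩ =>
    hm_ne (Finsupp.ext fun i => by fin_cases i <;> simp [h0, h1])
  have := hu m hmP
  have := hv m hmP
  omega

end Rbase

section SocleEmbedding

variable {p k : ℕ}

noncomputable def socleEmbed (f : (ZMod p)[X]) : (Rbase p k)[X] :=
  C (socleGen p k) * f.map (algebraMap (ZMod p) (Rbase p k))

theorem coeff_socleEmbed (f : (ZMod p)[X]) (j : ℕ) :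
    (socleEmbed f : (Rbase p k)[X]).coeff j
      = algebraMap (ZMod p) (Rbase p k) (f.coeff j) * socleGen p k := by
  rw [socleEmbed, coeff_C_mul, coeff_map, mul_comm]

theorem support_socleEmbed (hk : 0 < k) (f : (ZMod p)[X]) :
    (socleEmbed f : (Rbase p k)[X]).support = f.support := by
  ext j
  simp only [mem_support_iff, coeff_socleEmbed, ne_eq, algebraMap_mul_socleGen_eq_zero_iff hk]

theorem socleEmbed_ne_zero (hk : 0 < k) {f : (ZMod p)[X]} (hf : f ≠ 0) :
    (socleEmbed f : (Rbase p k)[X]) ≠ 0 := by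
  rwa [Ne, ← support_eq_empty, support_socleEmbed hk, support_eq_empty]

theorem degree_socleEmbed (hk : 0 < k) (f : (ZMod p)[X]) :
    (socleEmbed f : (Rbase p k)[X]).degree = f.degree := by
  rw [degree, degree, support_socleEmbed hk]

theorem mk_socleEmbed (n : ℕ) (f : (ZMod p)[X]) :
    Ideal.Quotient.mk (Ideal.span {(X : (Rbase p k)[X]) ^ n - 1}) (socleEmbed f)
      = uR p k n ^ (k - 1) * vR p k n * theta p k n f := by
  rw [uR, vR, theta, RingHom.comp_apply, ← map_pow, ← map_mul, ← map_mul, socleEmbed, socleGen,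
    C_mul, C_pow]
  rfl

theorem exists_socleEmbed_eq {H : (Rbase p k)[X]} (hu : ∀ j, uu p k * H.coeff j = 0)
    (hv : ∀ j, vv p k * H.coeff j = 0) : ∃ f : (ZMod p)[X], socleEmbed f = H := by
  choose c hc using fun j => exists_eq_algebraMap_mul_socleGen (hu j) (hv j)
  refine ⟨∑ j ∈ H.support, monomial j (c j), Polynomial.ext fun j => ?_⟩
  rw [coeff_socleEmbed, finsetSum_coeff]
  by_cases hj : j ∈ H.support
  · rw [Finset.sum_eq_single_of_mem j hj fun i _ hij => coeff_monomial_of_ne _ hij.symm,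
      coeff_monomial_same, hc]
  · rw [Finset.sum_eq_zero fun i hi => coeff_monomial_of_ne _ (ne_of_mem_of_not_mem hi hj).symm,
      notMem_support_iff.mp hj, map_zero, zero_mul]

theorem mem_torTorSet_self_iff {n : ℕ} {C : Ideal (Rn p k n)} {f : (ZMod p)[X]} :
    f ∈ torTorSet p k n C k ↔
      Ideal.Quotient.mk (Ideal.span {(X : (Rbase p k)[X]) ^ n - 1}) (socleEmbed f) ∈ C := by
  have huR : uR p k n ^ k = 0 := by
    rw [uR, ← map_pow, ← C_pow, uu_pow_self, C_0, map_zero]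
  rw [torTorSet, Set.mem_ofPred_eq, huR, zero_mul, Ideal.span_singleton_eq_bot.mpr rfl,
    sup_bot_eq, mk_socleEmbed]

theorem exists_mem_torTorSet_support_subset (hk : 0 < k) {n : ℕ} {C : Ideal (Rn p k n)}
    {F : (Rbase p k)[X]} (hF : F ≠ 0)
    (hFC : Ideal.Quotient.mk (Ideal.span {(X : (Rbase p k)[X]) ^ n - 1}) F ∈ C) :
    ∃ f : (ZMod p)[X], f ≠ 0 ∧ f.support ⊆ F.support ∧ f ∈ torTorSet p k n C k := by
  obtain ⟨e, hG, hvG⟩ := exists_pow_mul_ne_zero_and_pow_succ_mul_eq_zero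
    (a := Polynomial.C (vv p k)) (N := 2) hF
    (by rw [← C_pow, pow_two (vv p k), vv_mul_self, C_0, zero_mul])
  obtain ⟨m, hH, huH⟩ := exists_pow_mul_ne_zero_and_pow_succ_mul_eq_zero
    (a := Polynomial.C (uu p k)) (N := k) hG (by rw [← C_pow, uu_pow_self, C_0, zero_mul])
  set H := Polynomial.C (uu p k) ^ m * (Polynomial.C (vv p k) ^ e * F) with hH_def
  have hHu : Polynomial.C (uu p k) * H = 0 := by rw [hH_def, ← mul_assoc, ← pow_succ', huH]
  have hHv : Polynomial.C (vv p k) * H = 0 := by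
    linear_combination Polynomial.C (uu p k) ^ m * hvG
  have hH_smul : H = (uu p k ^ m * vv p k ^ e) • F := by
    rw [hH_def, smul_eq_C_mul, C_mul, C_pow, C_pow, mul_assoc]
  obtain ⟨f, hfH⟩ := exists_socleEmbed_eq (H := H)
    (fun j => by rw [← coeff_C_mul, hHu, coeff_zero])
    (fun j => by rw [← coeff_C_mul, hHv, coeff_zero])
  refine ⟨f, ?_, ?_, ?_⟩
  · rintro rfl
    exact hH (by rw [← hfH, socleEmbed, Polynomial.map_zero, mul_zero])
  · rw [← support_socleEmbed hk, hfH, hH_smul]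
    exact support_smul _ F
  · rw [mem_torTorSet_self_iff, hfH, hH_def, map_mul, map_mul]
    exact Ideal.mul_mem_left _ _ (Ideal.mul_mem_left _ _ hFC)

end SocleEmbedding

theorem stmt12 (p k n : ℕ) (hk : 0 < k)
    (C : Ideal (Rn p k n)) :
    dHam p k n C = dHamF p n (torTorSet p k n C k) := by
  rw [dHam, dHamF, Nat.sInf_eq_sInf_of_subset_of_forall_exists_le]
  · rintro _ ⟨f, hf0, hfn, hfC, rfl⟩
    exact ⟨socleEmbed f, socleEmbed_ne_zero hk hf0, degree_socleEmbed hk f ▸ hfn,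
      mem_torTorSet_self_iff.mp hfC, by rw [support_socleEmbed hk]⟩
  · rintro _ ⟨F, hF0, hFn, hFC, rfl⟩
    obtain ⟨f, hf0, hfF, hfC⟩ := exists_mem_torTorSet_support_subset hk hF0 hFC
    exact ⟨_, ⟨f, hf0, (degree_mono hfF).trans_lt hFn, hfC, rfl⟩, Finset.card_le_card hfF⟩
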